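/- Let n ≥ 1 and let J : ℝⁿ × ℝ → ℝ be a measurable kernel satisfying: supp J ⊂ ℝⁿ × [0,∞); J ≥ 0; J ∈ L¹(ℝ^{n+1}) with ∬ J = 1; and J has compact support. Set α = sup{β : ∬_{s ≤ β} J(y,s) dy ds < 1}. Let 0 < γ ≤ 1. Then there exists a constant C > 0, depending only on J, such that for every f ∈ C^{0,γ}(ℝⁿ) ∩ L^∞(ℝⁿ), the unique bounded continuous solution u of u(x,t) = ∬ J(x−y, t−s) ū(y,s) dy ds (with ū = f for s < 0 and ū = u for s ≥ 0) satisfies |u(x,t) − f(x)| ≤ C [f]_γ for all (x,t) ∈ ℝⁿ × [0,α]. -/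

import Mathlib

open MeasureTheory Real NNReal Filter Topology

private abbrev ESp (n : ℕ) := EuclideanSpace ℝ (Fin n)

private lemma ctrw_mp_sub_left {n : ℕ} (p₀ : ESp n × ℝ) :
    MeasurePreserving (fun q : ESp n × ℝ => p₀ - q) volume volume := by
  rw [show (volume : Measure (ESp n × ℝ))
      = (volume : Measure (ESp n)).prod (volume : Measure ℝ) from Measure.volume_eq_prod _ _]
  exact (Measure.measurePreserving_sub_left volume p₀.1).prod
    (Measure.measurePreserving_sub_left volume p₀.2)

private lemma ctrw_emb_sub_left {n : ℕ} (p₀ : ESp n × ℝ) :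
    MeasurableEmbedding (fun q : ESp n × ℝ => p₀ - q) :=
  (MeasurableEquiv.subLeft p₀).measurableEmbedding

private lemma ctrw_integral_sub_left {n : ℕ} (g : ESp n × ℝ → ℝ) (p₀ : ESp n × ℝ) :
    ∫ q, g (p₀ - q) = ∫ p, g p :=
  (ctrw_mp_sub_left p₀).integral_comp (ctrw_emb_sub_left p₀) g

private lemma ctrw_integrable_sub_left {n : ℕ} {g : ESp n × ℝ → ℝ} (hg : Integrable g)
    (p₀ : ESp n × ℝ) : Integrable (fun q => g (p₀ - q)) :=
  ((ctrw_mp_sub_left p₀).integrable_comp_emb (ctrw_emb_sub_left p₀)).mpr hg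

private lemma ctrw_null_slice (n : ℕ) : (volume : Measure (ESp n × ℝ)) {q | q.2 = 0} = 0 := by
  have h : {q : ESp n × ℝ | q.2 = 0} = Set.univ ×ˢ {0} := by
    ext ⟨y, s⟩; simp [eq_comm]
  rw [h, Measure.volume_eq_prod, Measure.prod_prod]
  simp

/-- **Uniform closeness to the initial datum up to the waiting time `α`.**
Let `J` be a nonnegative, integrable, compactly supported space-time probability
density on `ℝⁿ × ℝ` supported in `{t ≥ 0}`, and set
`α = sup{β : ∬_{s ≤ β} J < 1}`. For `0 < γ ≤ 1` there is a constant `C > 0`,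
depending only on `J`, such that for every `f ∈ C^{0,γ} ∩ L^∞(ℝⁿ)` with Hölder
constant `K` the (unique) bounded continuous solution `u` of `u = J ∗ ū` with
past data `f` satisfies `|u(x,t) − f(x)| ≤ C K` for all `(x,t) ∈ ℝⁿ × [0,α]`. -/
theorem ctrw_cauchy_problem_holder_estimate
    (n : ℕ) (hn : 1 ≤ n)
    (J : EuclideanSpace ℝ (Fin n) × ℝ → ℝ)
    (hJsupp : ∀ p : EuclideanSpace ℝ (Fin n) × ℝ, p.2 < 0 → J p = 0)
    (hJnonneg : ∀ p, 0 ≤ J p)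
    (hJmeas : Measurable J)
    (hJint : Integrable J)
    (hJone : ∫ p : EuclideanSpace ℝ (Fin n) × ℝ, J p = 1)
    (hJcpt : HasCompactSupport J)
    (γ : ℝ≥0) (hγ0 : 0 < γ) (hγ1 : γ ≤ 1) :
    ∃ C : ℝ, 0 < C ∧
      ∀ (f : EuclideanSpace ℝ (Fin n) → ℝ) (K : ℝ≥0),
        HolderWith K γ f →
        (∃ M : ℝ, ∀ x, |f x| ≤ M) →
        ∀ u : EuclideanSpace ℝ (Fin n) × ℝ → ℝ,
          (∀ (y : EuclideanSpace ℝ (Fin n)) (s : ℝ), s < 0 → u (y, s) = f y) →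
          ContinuousOn u {p : EuclideanSpace ℝ (Fin n) × ℝ | 0 ≤ p.2} →
          (∃ M : ℝ, ∀ p : EuclideanSpace ℝ (Fin n) × ℝ, 0 ≤ p.2 → |u p| ≤ M) →
          (∀ (x : EuclideanSpace ℝ (Fin n)) (t : ℝ), 0 ≤ t →
            u (x, t) = ∫ q : EuclideanSpace ℝ (Fin n) × ℝ, J (x - q.1, t - q.2) * u q) →
          ∀ (x : EuclideanSpace ℝ (Fin n)) (t : ℝ), 0 ≤ t →
            t ≤ sSup {β : ℝ |
              ∫ q in {q : EuclideanSpace ℝ (Fin n) × ℝ | q.2 ≤ β}, J q < 1} →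
            |u (x, t) - f x| ≤ C * K := by
  classical
  -- choose δ > 0 with small mass up to time δ
  obtain ⟨δ, hδ, hρ⟩ : ∃ δ : ℝ, 0 < δ ∧ ∫ q in {q : ESp n × ℝ | q.2 ≤ δ}, J q ≤ 1/2 := by
    have hF : Tendsto (fun k : ℕ =>
        ∫ q, ({q : ESp n × ℝ | q.2 ≤ 1/(k+1)}.indicator J) q) atTop
        (𝓝 (∫ _ : ESp n × ℝ, (0:ℝ))) := by
      apply tendsto_integral_of_dominated_convergence (fun q => |J q|)
      · intro k
        exact (hJmeas.indicator
          (measurableSet_le measurable_snd measurable_const)).aestronglyMeasurable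
      · exact hJint.abs
      · intro k
        filter_upwards with q
        rw [Set.indicator_apply]
        split_ifs
        · simp [Real.norm_eq_abs]
        · simp [abs_nonneg]
      · filter_upwards [compl_mem_ae_iff.mpr (ctrw_null_slice n)] with q hq
        have hq' : q.2 ≠ 0 := hq
        rcases lt_or_gt_of_ne hq' with h | h
        · have : ∀ k : ℕ, ({q : ESp n × ℝ | q.2 ≤ 1/(k+1)}.indicator J) q = 0 := by
            intro k
            rw [Set.indicator_apply]
            split_ifs
            · exact hJsupp q h
            · rfl
          simp only [this]
          exact tendsto_const_nhds
        · obtain ⟨k₀, hk₀⟩ := exists_nat_one_div_lt h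
          refine Filter.Tendsto.congr' ?_ (tendsto_const_nhds (x := (0:ℝ)))
          filter_upwards [eventually_ge_atTop k₀] with k hk
          have h1 : (1:ℝ)/(k+1) ≤ 1/(k₀+1) := by
            apply one_div_le_one_div_of_le (by positivity)
            push_cast; exact_mod_cast Nat.add_le_add_right hk 1
          have hnm : q ∉ {q : ESp n × ℝ | q.2 ≤ 1/(k+1:ℝ)} := by
            simp only [Set.mem_setOf_eq, not_le]
            exact lt_of_le_of_lt h1 hk₀
          exact (Set.indicator_of_notMem hnm J).symm
    rw [integral_zero] at hF
    obtain ⟨k, hk⟩ := (hF.eventually_le_const (by norm_num : (0:ℝ) < 1/2)).exists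
    refine ⟨1/(k+1), by positivity, ?_⟩
    rwa [integral_indicator (measurableSet_le measurable_snd measurable_const)] at hk
  -- bound on the support of J
  obtain ⟨R₀, hR₀⟩ := hJcpt.isBounded.subset_closedBall 0
  set R : ℝ := max R₀ 1 with hRdef
  have hR1 : (1:ℝ) ≤ R := le_max_right _ _
  have hR0 : (0:ℝ) < R := lt_of_lt_of_le one_pos hR1
  have hRsupp : ∀ p : ESp n × ℝ, J p ≠ 0 → ‖p.1‖ ≤ R ∧ p.2 ≤ R := by
    intro p hp
    have hmem : p ∈ tsupport J := subset_tsupport J hp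
    have hball := hR₀ hmem
    rw [Metric.mem_closedBall, dist_zero_right] at hball
    have hR' : ‖p‖ ≤ R := hball.trans (le_max_left _ _)
    refine ⟨(norm_fst_le p).trans hR', ?_⟩
    calc p.2 ≤ |p.2| := le_abs_self _
      _ = ‖p.2‖ := (Real.norm_eq_abs _).symm
      _ ≤ ‖p‖ := norm_snd_le p
      _ ≤ R := hR'
  set N : ℕ := ⌈R/δ⌉₊ with hNdef
  refine ⟨(2^(N+1) - 1) * 2 * R ^ (γ:ℝ), ?_, ?_⟩
  · have h2 : (2:ℝ) ≤ 2^(N+1) := by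
      calc (2:ℝ) = 2^1 := (pow_one 2).symm
        _ ≤ 2^(N+1) := pow_le_pow_right₀ one_le_two (by omega)
    have hrp : (0:ℝ) < R ^ (γ:ℝ) := Real.rpow_pos_of_pos hR0 _
    nlinarith
  intro f K hf hfbdd u hupast hucont hubdd huid x t ht htsup
  obtain ⟨Mf, hMf⟩ := hfbdd
  obtain ⟨Mu, hMu⟩ := hubdd
  set a : ℝ := (K:ℝ) * R ^ (γ:ℝ) with ha_def
  have ha : 0 ≤ a := mul_nonneg K.coe_nonneg (Real.rpow_pos_of_pos hR0 _).le
  set B : ℝ := Mu + Mf with hB_def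
  have hBbd : ∀ (y : ESp n) (s : ℝ), 0 ≤ s → |u (y, s) - f y| ≤ B := by
    intro y s hs
    calc |u (y, s) - f y| ≤ |u (y, s)| + |f y| := abs_sub _ _
      _ ≤ Mu + Mf := add_le_add (hMu _ hs) (hMf _)
  have hB0 : 0 ≤ B := le_trans (abs_nonneg _) (hBbd 0 0 le_rfl)
  have hfc : Continuous f := hf.continuous (by exact_mod_cast hγ0)
  -- measurability and boundedness of u
  have hubd' : ∀ q : ESp n × ℝ, |u q| ≤ max Mu Mf := by
    intro q
    rcases lt_or_ge q.2 0 with h | h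
    · have : u (q.1, q.2) = f q.1 := hupast q.1 q.2 h
      rw [Prod.mk.eta] at this
      rw [this]
      exact (hMf _).trans (le_max_right _ _)
    · exact (hMu q h).trans (le_max_left _ _)
  have husm : AEStronglyMeasurable u (volume : Measure (ESp n × ℝ)) := by
    have hs1 : MeasurableSet {q : ESp n × ℝ | q.2 < 0} :=
      measurableSet_lt measurable_snd measurable_const
    have hs2 : MeasurableSet {q : ESp n × ℝ | 0 ≤ q.2} :=
      measurableSet_le measurable_const measurable_snd
    have h1 : AEMeasurable u (volume.restrict {q : ESp n × ℝ | q.2 < 0}) := by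
      refine ((hfc.comp continuous_fst).measurable.aemeasurable).congr ?_
      filter_upwards [ae_restrict_mem hs1] with q hq
      have : u (q.1, q.2) = f q.1 := hupast q.1 q.2 hq
      rw [Prod.mk.eta] at this
      exact this.symm
    have h2 : AEMeasurable u (volume.restrict {q : ESp n × ℝ | 0 ≤ q.2}) :=
      hucont.aemeasurable hs2
    have hdisj : Disjoint {q : ESp n × ℝ | q.2 < 0} {q : ESp n × ℝ | 0 ≤ q.2} := by
      rw [Set.disjoint_left]; intro q hq hq'
      simp only [Set.mem_setOf_eq] at hq hq'
      linarith
    have hunion : {q : ESp n × ℝ | q.2 < 0} ∪ {q : ESp n × ℝ | 0 ≤ q.2} = Set.univ := by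
      ext q; simp [lt_or_ge q.2 0]
    have := aemeasurable_add_measure_iff.mpr ⟨h1, h2⟩
    rw [← Measure.restrict_union hdisj hs2, hunion, Measure.restrict_univ] at this
    exact this.aestronglyMeasurable
  -- the main one-step estimate
  have hmain : ∀ (T X P : ℝ), 0 ≤ X → 0 ≤ P →
      (∀ (y : ESp n) (s : ℝ), 0 ≤ s → s ≤ T → |u (y, s) - f y| ≤ X) →
      (∀ (y : ESp n) (s : ℝ), 0 ≤ s → s ≤ T - δ → |u (y, s) - f y| ≤ P) →
      ∀ (z : ESp n) (r : ℝ), 0 ≤ r → r ≤ T → |u (z, r) - f z| ≤ a + X/2 + P := by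
    intro T X P hX hP hcur hprev z r hr hrT
    set Jf : ESp n × ℝ → ℝ := fun q => J (z - q.1, r - q.2) with hJf_def
    have hJfeq : Jf = fun q => J ((z, r) - q) := rfl
    have hJf_int : Integrable Jf := ctrw_integrable_sub_left hJint (z, r)
    have hJf_one : ∫ q, Jf q = 1 := (ctrw_integral_sub_left J (z, r)).trans hJone
    have hJf0 : ∀ q, 0 ≤ Jf q := fun q => hJnonneg _
    have hu_int : Integrable (fun q => Jf q * u q) := by
      have h := hJf_int.bdd_mul husm
        (c := max Mu Mf) (Filter.Eventually.of_forall fun q => by rw [Real.norm_eq_abs]; exact hubd' q)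
      refine h.congr ?_
      filter_upwards with q using mul_comm _ _
    have hsub_int : Integrable (fun q => Jf q * (u q - f z)) := by
      have heq : (fun q => Jf q * (u q - f z)) = fun q => Jf q * u q - Jf q * f z := by
        funext q; ring
      rw [heq]
      exact hu_int.sub (hJf_int.mul_const (f z))
    have hkey : u (z, r) - f z = ∫ q, Jf q * (u q - f z) := by
      have h1 : u (z, r) = ∫ q, Jf q * u q := huid z r hr
      have h2 : ∫ q, Jf q * f z = f z := by
        rw [integral_mul_const, hJf_one, one_mul]
      have h3 : ∫ q, Jf q * (u q - f z) = (∫ q, Jf q * u q) - ∫ q, Jf q * f z := by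
        rw [← integral_sub hu_int (hJf_int.mul_const (f z))]
        congr 1; funext q; ring
      rw [h1, h3, h2]
    set Aset : Set (ESp n × ℝ) := {q | r - δ < q.2} with hAdef
    set Bset : Set (ESp n × ℝ) := {q | 0 ≤ q.2 ∧ q.2 ≤ r - δ} with hBdef
    have hAmeas : MeasurableSet Aset := measurableSet_lt measurable_const measurable_snd
    have hBmeas : MeasurableSet Bset :=
      (measurableSet_le measurable_const measurable_snd).inter
        (measurableSet_le measurable_snd measurable_const)
    set g : ESp n × ℝ → ℝ :=
      fun q => a * Jf q + X * Aset.indicator Jf q + P * Bset.indicator Jf q with hg_def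
    have hg_int : Integrable g :=
      ((hJf_int.const_mul a).add ((hJf_int.indicator hAmeas).const_mul X)).add
        ((hJf_int.indicator hBmeas).const_mul P)
    -- pointwise bound
    have hpt : ∀ q, Jf q * |u q - f z| ≤ g q := by
      intro q
      have hindA : 0 ≤ X * Aset.indicator Jf q :=
        mul_nonneg hX (Set.indicator_nonneg (fun p _ => hJf0 p) q)
      have hindB : 0 ≤ P * Bset.indicator Jf q :=
        mul_nonneg hP (Set.indicator_nonneg (fun p _ => hJf0 p) q)
      by_cases h0 : Jf q = 0
      · simp [hg_def, Set.indicator_apply, h0]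
      · have hq2 : q.2 ≤ r := by
          by_contra hc
          push_neg at hc
          exact h0 (hJsupp (z - q.1, r - q.2) (by simp only; linarith))
        have hxq : ‖z - q.1‖ ≤ R := (hRsupp _ h0).1
        have hfza : |f q.1 - f z| ≤ a := by
          have hd := hf.dist_le q.1 z
          rw [Real.dist_eq] at hd
          refine hd.trans ?_
          have hdist : dist q.1 z ≤ R := by
            rw [dist_eq_norm, norm_sub_rev]; exact hxq
          rw [ha_def]
          exact mul_le_mul_of_nonneg_left
            (Real.rpow_le_rpow dist_nonneg hdist γ.coe_nonneg) K.coe_nonneg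
        have hJfpos : 0 ≤ Jf q := hJf0 q
        rcases lt_or_ge q.2 0 with hneg | hpos
        · have hu_eq : u q = f q.1 := by
            have := hupast q.1 q.2 hneg
            rwa [Prod.mk.eta] at this
          have habs : |u q - f z| ≤ a := by rw [hu_eq]; exact hfza
          calc Jf q * |u q - f z| ≤ Jf q * a := mul_le_mul_of_nonneg_left habs hJfpos
            _ = a * Jf q := mul_comm _ _
            _ ≤ g q := by simp only [hg_def]; linarith
        · rcases le_or_gt q.2 (r - δ) with hle | hgt
          · have hqB : q ∈ Bset := ⟨hpos, hle⟩
            have hub : |u q - f q.1| ≤ P := by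
              have := hprev q.1 q.2 hpos (hle.trans (by linarith))
              rwa [Prod.mk.eta] at this
            have habs : |u q - f z| ≤ P + a := by
              have : u q - f z = (u q - f q.1) + (f q.1 - f z) := by ring
              rw [this]
              exact (abs_add_le _ _).trans (add_le_add hub hfza)
            have hBind : Bset.indicator Jf q = Jf q := Set.indicator_of_mem hqB _
            calc Jf q * |u q - f z| ≤ Jf q * (P + a) := mul_le_mul_of_nonneg_left habs hJfpos
              _ = a * Jf q + P * Jf q := by ring
              _ ≤ g q := by simp only [hg_def]; rw [hBind]; linarith
          · have hqA : q ∈ Aset := hgt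
            have hub : |u q - f q.1| ≤ X := by
              have := hcur q.1 q.2 hpos (hq2.trans hrT)
              rwa [Prod.mk.eta] at this
            have habs : |u q - f z| ≤ X + a := by
              have : u q - f z = (u q - f q.1) + (f q.1 - f z) := by ring
              rw [this]
              exact (abs_add_le _ _).trans (add_le_add hub hfza)
            have hAind : Aset.indicator Jf q = Jf q := Set.indicator_of_mem hqA _
            calc Jf q * |u q - f z| ≤ Jf q * (X + a) := mul_le_mul_of_nonneg_left habs hJfpos
              _ = a * Jf q + X * Jf q := by ring
              _ ≤ g q := by simp only [hg_def]; rw [hAind]; linarith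
    have habs : |u (z, r) - f z| ≤ ∫ q, g q := by
      rw [hkey]
      calc |∫ q, Jf q * (u q - f z)| = ‖∫ q, Jf q * (u q - f z)‖ :=
            (Real.norm_eq_abs _).symm
        _ ≤ ∫ q, ‖Jf q * (u q - f z)‖ := norm_integral_le_integral_norm _
        _ ≤ ∫ q, g q := by
            refine integral_mono hsub_int.norm hg_int fun q => ?_
            show ‖Jf q * (u q - f z)‖ ≤ g q
            rw [norm_mul, Real.norm_eq_abs, Real.norm_eq_abs, abs_of_nonneg (hJf0 q)]
            exact hpt q
    -- bound the integral of g
    have hIA : ∫ q, Aset.indicator Jf q ≤ 1/2 := by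
      set W : ESp n × ℝ → ℝ := {p : ESp n × ℝ | p.2 < δ}.indicator J with hWdef
      have hWmeas : MeasurableSet {p : ESp n × ℝ | p.2 < δ} :=
        measurableSet_lt measurable_snd measurable_const
      have h1 : ∀ q, Aset.indicator Jf q = W ((z, r) - q) := by
        intro q
        have hsnd : ((z, r) - q : ESp n × ℝ).2 = r - q.2 := by
          simp [Prod.snd_sub]
        have hiff : ((z, r) - q : ESp n × ℝ) ∈ {p : ESp n × ℝ | p.2 < δ} ↔ q ∈ Aset := by
          rw [Set.mem_setOf_eq, Set.mem_setOf_eq, hsnd]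
          constructor <;> intro h <;> linarith
        rw [hWdef, Set.indicator_apply, Set.indicator_apply]
        by_cases hq : q ∈ Aset
        · rw [if_pos hq, if_pos (hiff.mpr hq)]; rfl
        · rw [if_neg hq, if_neg (fun hc => hq (hiff.mp hc))]
      calc ∫ q, Aset.indicator Jf q = ∫ q, W ((z, r) - q) := by simp only [h1]
        _ = ∫ p, W p := ctrw_integral_sub_left W (z, r)
        _ = ∫ p in {p : ESp n × ℝ | p.2 < δ}, J p := integral_indicator hWmeas
        _ ≤ ∫ p in {p : ESp n × ℝ | p.2 ≤ δ}, J p := by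
            apply setIntegral_mono_set hJint.integrableOn
            · filter_upwards with p using hJnonneg p
            · have hsub : {p : ESp n × ℝ | p.2 < δ} ⊆ {p : ESp n × ℝ | p.2 ≤ δ} := by
                intro p hp
                simp only [Set.mem_setOf_eq] at hp ⊢
                exact le_of_lt hp
              exact hsub.eventuallyLE
        _ ≤ 1/2 := hρ
    have hIB : ∫ q, Bset.indicator Jf q ≤ 1 := by
      calc ∫ q, Bset.indicator Jf q = ∫ q in Bset, Jf q := integral_indicator hBmeas
        _ ≤ ∫ q, Jf q := setIntegral_le_integral hJf_int
            (by filter_upwards with q using hJf0 q)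
        _ = 1 := hJf_one
    have hgle : ∫ q, g q ≤ a + X/2 + P := by
      simp only [hg_def]
      have hint0 : Integrable (fun q : ESp n × ℝ => a * Jf q) := hJf_int.const_mul a
      have hintA : Integrable (fun q : ESp n × ℝ => X * Aset.indicator Jf q) :=
        (hJf_int.indicator hAmeas).const_mul X
      have hintB : Integrable (fun q : ESp n × ℝ => P * Bset.indicator Jf q) :=
        (hJf_int.indicator hBmeas).const_mul P
      have hint1 : Integrable
          (fun q : ESp n × ℝ => a * Jf q + X * Aset.indicator Jf q) := by
        exact hint0.add hintA
      rw [integral_add hint1 hintB, integral_add hint0 hintA,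
        integral_const_mul, integral_const_mul, integral_const_mul, hJf_one]
      have hA' := mul_le_mul_of_nonneg_left hIA hX
      have hB' := mul_le_mul_of_nonneg_left hIB hP
      linarith
    exact habs.trans hgle
  -- the step lemma via iteration
  have hstep : ∀ (T P : ℝ), 0 ≤ P →
      (∀ (y : ESp n) (s : ℝ), 0 ≤ s → s ≤ T - δ → |u (y, s) - f y| ≤ P) →
      ∀ (z : ESp n) (r : ℝ), 0 ≤ r → r ≤ T → |u (z, r) - f z| ≤ 2 * (a + P) := by
    intro T P hP hprev
    have hiter : ∀ i : ℕ, ∀ (z : ESp n) (r : ℝ), 0 ≤ r → r ≤ T →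
        |u (z, r) - f z| ≤ (1/2)^i * B + 2*(a+P) := by
      intro i
      induction i with
      | zero =>
        intro z r hr hrT
        have := hBbd z r hr
        simp only [pow_zero, one_mul]
        linarith
      | succ i ih =>
        intro z r hr hrT
        have hX : 0 ≤ (1/2:ℝ)^i * B + 2*(a+P) := by positivity
        have h := hmain T ((1/2)^i * B + 2*(a+P)) P hX hP ih hprev z r hr hrT
        refine h.trans (le_of_eq ?_)
        rw [pow_succ]
        ring
    intro z r hr hrT
    have hlim : Tendsto (fun i : ℕ => (1/2:ℝ)^i * B + 2*(a+P)) atTop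
        (𝓝 (0 * B + 2*(a+P))) :=
      ((_root_.tendsto_pow_atTop_nhds_zero_of_lt_one (by norm_num) (by norm_num)).mul_const B).add
        tendsto_const_nhds
    have := ge_of_tendsto hlim (Filter.Eventually.of_forall fun i => hiter i z r hr hrT)
    simpa using this
  -- outer induction
  have houter : ∀ (j : ℕ) (z : ESp n) (r : ℝ), 0 ≤ r → r ≤ (j : ℝ) * δ →
      |u (z, r) - f z| ≤ (2^(j+1) - 1) * (2*a) := by
    intro j
    induction j with
    | zero =>
      intro z r hr hrj
      have h := hstep 0 0 le_rfl (fun y s hs hsT => by exfalso; linarith) z r hr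
        (by simpa using hrj)
      refine h.trans (le_of_eq ?_)
      norm_num
    | succ j ih =>
      intro z r hr hrj
      have h1 : (1:ℝ) ≤ 2^(j+1) := by
        calc (1:ℝ) = 1^(j+1) := (one_pow _).symm
          _ ≤ 2^(j+1) := pow_le_pow_left₀ one_pos.le one_le_two _
      have hPnn : (0:ℝ) ≤ (2^(j+1) - 1) * (2*a) := mul_nonneg (by linarith) (by linarith)
      have h := hstep ((j+1 : ℕ) * δ) ((2^(j+1) - 1) * (2*a)) hPnn
        (fun y s hs hsT => ih y s hs (by push_cast at hsT ⊢; linarith)) z r hr hrj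
      refine h.trans (le_of_eq ?_)
      rw [pow_succ]
      push_cast
      ring
  -- conclude
  have htR : t ≤ (N : ℝ) * δ := by
    have hS_le : sSup {β : ℝ | ∫ q in {q : ESp n × ℝ | q.2 ≤ β}, J q < 1} ≤ R := by
      apply Real.sSup_le _ (by linarith)
      intro β hβ
      simp only [Set.mem_setOf_eq] at hβ
      by_contra hc
      push_neg at hc
      have heq : ∫ q in {q : ESp n × ℝ | q.2 ≤ β}, J q = 1 := by
        rw [setIntegral_eq_integral_of_forall_compl_eq_zero]
        · exact hJone
        · intro q hq
          simp only [Set.mem_setOf_eq, not_le] at hq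
          by_contra hJ0
          exact absurd ((hRsupp q hJ0).2) (by linarith)
      rw [heq] at hβ
      exact lt_irrefl _ hβ
    have hRN : R ≤ (N : ℝ) * δ := by
      have := Nat.le_ceil (R/δ)
      rw [div_le_iff₀ hδ] at this
      exact this
    exact htsup.trans (hS_le.trans hRN)
  have h := houter N x t ht htR
  refine h.trans (le_of_eq ?_)
  rw [ha_def]
  ring
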